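/- Set π_{n,k} := 2(n+1)/((n−1)(k+1)(k+2)), A2(n,k1,k2) := 4(n+1)(n+2)/((n−1)(n−2)(k1+1)(k1+2)(k2+2)(k2+3)) and B2(n,k1,k2) := 4(n+2)(n+1)(n(k2+6) − 5k2 − 14)/((n−1)(n−2)(n−3)(k1+1)(k1+2)(k2+2)(k2+3)(k2+4)). Then for all integers n ≥ 4 and 1 ≤ k1 < k2 ≤ n−1: 2(n−2)·C(n,2)^{−1}·A2(n,k1,k2) + C(n−2,2)·C(n,2)^{−1}·B2(n,k1,k2) − π_{n,k1}·π_{n,k2} = −8(n+1)(3n − k2 + 2)(n − k2 − 1) / (n(n−1)²(k1+1)(k1+2)(k2+1)(k2+2)(k2+3)(k2+4)). -/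

import Mathlib

/-- `π_{n,k}`: probability that a random pair of tips coalesced at the `k`-th speciation
event of a Yule tree with `n` tips. -/
noncomputable def piProb (n k : ℝ) : ℝ := 2 * (n + 1) / ((n - 1) * (k + 1) * (k + 2))

/-- Case (ii): two pairs sharing one tip coalesce at events `k1` and `k2`. -/
noncomputable def caseII2 (n k1 k2 : ℝ) : ℝ :=
  4 * (n + 1) * (n + 2) / ((n - 1) * (n - 2) * (k1 + 1) * (k1 + 2) * (k2 + 2) * (k2 + 3))

/-- Case (iii): two disjoint pairs coalesce at events `k1` and `k2`. -/
noncomputable def caseIII2 (n k1 k2 : ℝ) : ℝ :=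
  4 * (n + 2) * (n + 1) * (n * (k2 + 6) - 5 * k2 - 14) /
    ((n - 1) * (n - 2) * (n - 3) * (k1 + 1) * (k1 + 2) * (k2 + 2) * (k2 + 3) * (k2 + 4))

/-! The pair weights cancel the factors `n - 2` and `n - 3` of the two cases, so the mixture
`E[E[1_{k1} | 𝒴_n] E[1_{k2} | 𝒴_n]]` has the common denominator `n (n - 1)²`; subtracting
`π_{n,k1} π_{n,k2}` leaves the numerator
`(n + 2)(n (k2 + 6) - k2 + 2)(k2 + 1) - n (n + 1)(k2 + 3)(k2 + 4) = -2 (3n - k2 + 2)(n - k2 - 1)`. -/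

section

variable {n : ℝ} (k1 k2 : ℝ)

lemma sharedTip_add_disjoint_eq (hn : 3 < n) (hk1 : 0 ≤ k1) (hk2 : 0 ≤ k2) :
    2 * (n - 2) * (n * (n - 1) / 2)⁻¹ * caseII2 n k1 k2
      + ((n - 2) * (n - 3) / 2) * (n * (n - 1) / 2)⁻¹ * caseIII2 n k1 k2
    = 4 * (n + 1) * (n + 2) * (n * (k2 + 6) - k2 + 2) /
        (n * (n - 1) ^ 2 * (k1 + 1) * (k1 + 2) * (k2 + 2) * (k2 + 3) * (k2 + 4)) := by
  have hn0 : n ≠ 0 := by linarith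
  have hn1 : n - 1 ≠ 0 := by linarith
  have hn2 : n - 2 ≠ 0 := by linarith
  have hn3 : n - 3 ≠ 0 := by linarith
  unfold caseII2 caseIII2
  field_simp
  ring

lemma piProb_mul_piProb :
    piProb n k1 * piProb n k2
      = 4 * (n + 1) ^ 2 / ((n - 1) ^ 2 * (k1 + 1) * (k1 + 2) * (k2 + 1) * (k2 + 2)) := by
  unfold piProb
  rw [div_mul_div_comm]
  ring

lemma covariance_eq (hn : 3 < n) (hk1 : 0 ≤ k1) (hk2 : 0 ≤ k2) :
    2 * (n - 2) * (n * (n - 1) / 2)⁻¹ * caseII2 n k1 k2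
      + ((n - 2) * (n - 3) / 2) * (n * (n - 1) / 2)⁻¹ * caseIII2 n k1 k2
      - piProb n k1 * piProb n k2
    = -8 * (n + 1) * (3 * n - k2 + 2) * (n - k2 - 1) /
        (n * (n - 1) ^ 2 * (k1 + 1) * (k1 + 2) * (k2 + 1) * (k2 + 2) * (k2 + 3) * (k2 + 4)) := by
  have hn0 : n ≠ 0 := by linarith
  have hn1 : n - 1 ≠ 0 := by linarith
  rw [sharedTip_add_disjoint_eq k1 k2 hn hk1 hk2, piProb_mul_piProb]
  field_simp
  ring

end

theorem stmt5_general (n k1 k2 : ℕ) (hn : 4 ≤ n) :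
    2 * ((n : ℝ) - 2) * ((n : ℝ) * ((n : ℝ) - 1) / 2)⁻¹ * caseII2 n k1 k2
      + (((n : ℝ) - 2) * ((n : ℝ) - 3) / 2) * ((n : ℝ) * ((n : ℝ) - 1) / 2)⁻¹ * caseIII2 n k1 k2
      - piProb n k1 * piProb n k2
    = -8 * ((n : ℝ) + 1) * (3 * (n : ℝ) - k2 + 2) * ((n : ℝ) - k2 - 1) /
        ((n : ℝ) * ((n : ℝ) - 1) ^ 2 * ((k1 : ℝ) + 1) * ((k1 : ℝ) + 2) * ((k2 : ℝ) + 1) *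
          ((k2 : ℝ) + 2) * ((k2 : ℝ) + 3) * ((k2 : ℝ) + 4)) :=
  covariance_eq k1 k2 (by exact_mod_cast hn) k1.cast_nonneg k2.cast_nonneg

/-- Closed form for the covariance `Cov(E[1_{k1}^{(n)} | 𝒴_n], E[1_{k2}^{(n)} | 𝒴_n])`
of a Yule tree with `n` tips. -/
theorem stmt5 (n k1 k2 : ℕ) (hn : 4 ≤ n) (hk1 : 1 ≤ k1) (hk12 : k1 < k2) (hk2 : k2 ≤ n - 1) :
    2 * ((n : ℝ) - 2) * ((n : ℝ) * ((n : ℝ) - 1) / 2)⁻¹ * caseII2 n k1 k2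
      + (((n : ℝ) - 2) * ((n : ℝ) - 3) / 2) * ((n : ℝ) * ((n : ℝ) - 1) / 2)⁻¹ * caseIII2 n k1 k2
      - piProb n k1 * piProb n k2
    = -8 * ((n : ℝ) + 1) * (3 * (n : ℝ) - k2 + 2) * ((n : ℝ) - k2 - 1) /
        ((n : ℝ) * ((n : ℝ) - 1) ^ 2 * ((k1 : ℝ) + 1) * ((k1 : ℝ) + 2) * ((k2 : ℝ) + 1) *
          ((k2 : ℝ) + 2) * ((k2 : ℝ) + 3) * ((k2 : ℝ) + 4)) :=
  stmt5_general n k1 k2 hn
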